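/- Let g be the 5×5 symmetric matrix with block form [[0, 0, −1], [0, I₃, 0], [−1, 0, 0]] (rows and columns indexed 0,…,4), and let möb = {X ∈ Matrix (Fin 5) (Fin 5) ℝ : Xᵀ g + g X = 0} be the Lie algebra of the Möbius group, with bracket the matrix commutator. For each fixed C ∈ ℝ, let 𝔥_C ⊂ möb be the set of X ∈ möb whose entries X^a_b (a = row, b = column, indices 0,…,4) satisfy: X⁰₀ = 0, X⁰₁ = (−1/2 + C)·X¹₀, X⁰₂ = (−1/2 − C)·X²₀, X⁰₃ = 0, X²₁ = 0, X³₁ = X¹₀, X³₂ = −X²₀, and X³₀ = 0. Then 𝔥_C is a 2-dimensional Lie subalgebra of möb. -/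

import Mathlib

/-- The Gram matrix `g = [[0,0,-1],[0,I₃,0],[-1,0,0]]` of the Lorentz form in a
Möbius frame. -/
def mobG : Matrix (Fin 5) (Fin 5) ℝ :=
  !![0, 0, 0, 0, -1;
     0, 1, 0, 0, 0;
     0, 0, 1, 0, 0;
     0, 0, 0, 1, 0;
     -1, 0, 0, 0, 0]

/-- Membership in the Möbius Lie algebra `möb = {X : Xᵀ g + g X = 0}`. -/
def memMob (X : Matrix (Fin 5) (Fin 5) ℝ) : Prop :=
  X.transpose * mobG + mobG * X = 0

/-- For fixed `C ∈ ℝ`, membership in the subset `𝔥_C ⊂ möb` cut out by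
`X⁰₀ = 0`, `X⁰₁ = (-1/2 + C) X¹₀`, `X⁰₂ = (-1/2 - C) X²₀`, `X⁰₃ = 0`, `X²₁ = 0`,
`X³₁ = X¹₀`, `X³₂ = -X²₀`, `X³₀ = 0`. -/
def memHC (C : ℝ) (X : Matrix (Fin 5) (Fin 5) ℝ) : Prop :=
  memMob X ∧ X 0 0 = 0 ∧ X 0 1 = (-(1 / 2) + C) * X 1 0 ∧
    X 0 2 = (-(1 / 2) - C) * X 2 0 ∧ X 0 3 = 0 ∧ X 2 1 = 0 ∧
    X 3 1 = X 1 0 ∧ X 3 2 = -(X 2 0) ∧ X 3 0 = 0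

/-!
Every entry of an element `X` of `𝔥_C` is forced by the eight defining equations and the
skew-symmetry of `g X` to be a multiple of `X¹₀` or `X²₀`, so `𝔥_C` is the plane spanned by the
two elements `A_C`, `B_C` with `(X¹₀, X²₀) = (1, 0)` and `(0, 1)`. These satisfy
`A_C B_C = B_C A_C = 0`; in particular they commute, so `𝔥_C` is an abelian, hence closed,
subalgebra.
-/

open Matrix Submodule

theorem Commute.of_mem_span_pair {R A : Type*} [Semiring R] [NonUnitalNonAssocSemiring A]
    [Module R A] [IsScalarTower R A A] [SMulCommClass R A A] {a b x y : A} (hab : Commute a b)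
    (hx : x ∈ span R {a, b}) (hy : y ∈ span R {a, b}) : Commute x y := by
  have hpair : ∀ u ∈ ({a, b} : Set A), ∀ v ∈ ({a, b} : Set A), Commute u v := by
    rintro u (rfl | rfl) v (rfl | rfl)
    exacts [.refl _, hab, hab.symm, .refl _]
  exact Commute.span_left (fun u hu => Commute.span_right (hpair u hu) y hy) x hx

theorem finrank_span_pair_eq_two {K V : Type*} [DivisionRing K] [AddCommGroup V] [Module K V]
    {x y : V} (h : LinearIndependent K ![x, y]) : Module.finrank K (span K {x, y}) = 2 := by
  rw [← range_cons_cons_empty x y ![], finrank_span_eq_card h, Fintype.card_fin]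

theorem mobG_mul (X : Matrix (Fin 5) (Fin 5) ℝ) :
    mobG * X = of ![-X 4, X 1, X 2, X 3, -X 0] := by
  ext i j
  fin_cases i <;> simp [mobG, mul_apply, Fin.sum_univ_five]

theorem mobG_transpose : mobGᵀ = mobG := by
  ext i j
  fin_cases i <;> fin_cases j <;> simp [mobG]

theorem memMob_iff_transpose_eq_neg (X : Matrix (Fin 5) (Fin 5) ℝ) :
    memMob X ↔ (mobG * X)ᵀ = -(mobG * X) := by
  rw [memMob, transpose_mul, mobG_transpose, add_eq_zero_iff_eq_neg]

theorem memMob_iff_mem_skewAdjointMatricesSubmodule (X : Matrix (Fin 5) (Fin 5) ℝ) :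
    memMob X ↔ X ∈ skewAdjointMatricesSubmodule mobG := by
  rw [mem_skewAdjointMatricesSubmodule, Matrix.IsSkewAdjoint, Matrix.IsAdjointPair, memMob,
    Matrix.mul_neg, add_eq_zero_iff_eq_neg]

noncomputable def dupinA (C : ℝ) : Matrix (Fin 5) (Fin 5) ℝ :=
  !![0, -(1/2)+C, 0, 0, 0;
     1, 0, 0, -1, -(1/2)+C;
     0, 0, 0, 0, 0;
     0, 1, 0, 0, 0;
     0, 1, 0, 0, 0]

noncomputable def dupinB (C : ℝ) : Matrix (Fin 5) (Fin 5) ℝ :=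
  !![0, 0, -(1/2)-C, 0, 0;
     0, 0, 0, 0, 0;
     1, 0, 0, 1, -(1/2)-C;
     0, 0, -1, 0, 0;
     0, 0, 1, 0, 0]

theorem dupinA_mem_skewAdjointMatricesSubmodule (C : ℝ) :
    dupinA C ∈ skewAdjointMatricesSubmodule mobG := by
  rw [← memMob_iff_mem_skewAdjointMatricesSubmodule, memMob_iff_transpose_eq_neg, mobG_mul]
  ext i j
  simp only [transpose_apply, Matrix.neg_apply, of_apply]
  fin_cases i <;> fin_cases j <;> simp [dupinA]

theorem dupinB_mem_skewAdjointMatricesSubmodule (C : ℝ) :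
    dupinB C ∈ skewAdjointMatricesSubmodule mobG := by
  rw [← memMob_iff_mem_skewAdjointMatricesSubmodule, memMob_iff_transpose_eq_neg, mobG_mul]
  ext i j
  simp only [transpose_apply, Matrix.neg_apply, of_apply]
  fin_cases i <;> fin_cases j <;> simp [dupinB, sub_eq_add_neg]

theorem memHC_smul_dupinA_add_smul_dupinB (C a b : ℝ) :
    memHC C (a • dupinA C + b • dupinB C) := by
  refine ⟨(memMob_iff_mem_skewAdjointMatricesSubmodule _).2 ?_, by simp [dupinA, dupinB, mul_comm]⟩
  exact add_mem (smul_mem _ a (dupinA_mem_skewAdjointMatricesSubmodule C))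
    (smul_mem _ b (dupinB_mem_skewAdjointMatricesSubmodule C))

theorem eq_smul_dupinA_add_smul_dupinB {C : ℝ} {X : Matrix (Fin 5) (Fin 5) ℝ} (h : memHC C X) :
    X = X 1 0 • dupinA C + X 2 0 • dupinB C := by
  obtain ⟨hmob, h00, h01, h02, h03, h21, h31, h32, h30⟩ := h
  have hs : ∀ i j, (mobG * X) j i = -(mobG * X) i j := fun i j =>
    congrFun (congrFun ((memMob_iff_transpose_eq_neg X).1 hmob) i) j
  simp only [mobG_mul, of_apply, cons_val', Pi.neg_apply, cons_val_fin_one, Fin.forall_fin_succ,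
    cons_val_zero, neg_inj, cons_val_succ, Fin.succ_zero_eq_one, Fin.succ_one_eq_two,
    Fin.reduceSucc, IsEmpty.forall_iff, and_true, neg_neg] at hs
  ext i j
  simp only [Matrix.add_apply, Matrix.smul_apply, smul_eq_mul]
  fin_cases i <;> fin_cases j <;> simp [dupinA, dupinB] <;> linarith

theorem commute_dupinA_dupinB (C : ℝ) : Commute (dupinA C) (dupinB C) := by
  ext i j
  fin_cases i <;> fin_cases j <;> simp [dupinA, dupinB, mul_apply, Fin.sum_univ_five] <;> ring

theorem linearIndependent_dupinA_dupinB (C : ℝ) : LinearIndependent ℝ ![dupinA C, dupinB C] := by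
  refine LinearIndependent.pair_iff.2 fun a b hab => ⟨?_, ?_⟩
  · simpa [dupinA, dupinB] using congrFun (congrFun hab 1) 0
  · simpa [dupinA, dupinB] using congrFun (congrFun hab 2) 0

theorem mem_span_dupinA_dupinB_iff (C : ℝ) (X : Matrix (Fin 5) (Fin 5) ℝ) :
    X ∈ span ℝ {dupinA C, dupinB C} ↔ memHC C X := by
  rw [mem_span_pair]
  constructor
  · rintro ⟨a, b, rfl⟩
    exact memHC_smul_dupinA_add_smul_dupinB C a b
  · exact fun h => ⟨_, _, (eq_smul_dupinA_add_smul_dupinB h).symm⟩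

/-- **The Dupin subalgebras `𝔥_C` of `möb`.**
For each `C ∈ ℝ`, the set `𝔥_C` is a 2-dimensional Lie subalgebra of the Möbius
Lie algebra `möb`. -/
theorem mobius_dupin_subalgebra (C : ℝ) :
    ∃ H : Submodule ℝ (Matrix (Fin 5) (Fin 5) ℝ),
      (∀ X, X ∈ H ↔ memHC C X) ∧
      Module.finrank ℝ H = 2 ∧
      ∀ X ∈ H, ∀ Y ∈ H, X * Y - Y * X ∈ H := by
  refine ⟨span ℝ {dupinA C, dupinB C}, mem_span_dupinA_dupinB_iff C,
    finrank_span_pair_eq_two (linearIndependent_dupinA_dupinB C), fun X hX Y hY => ?_⟩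
  rw [((commute_dupinA_dupinB C).of_mem_span_pair hX hY).eq, sub_self]
  exact zero_mem _
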